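/- Let (P, !) be an R-graded doctrine that is multiplicative and has quantifiers, i.e. for every projection π : A×B → B the reindexing P(π) has a left adjoint E_π and a right adjoint A_π, and these adjoints satisfy the Beck–Chevalley condition (for every f : X → B, P(f)∘E_π = E_π∘P(id_A×f) and P(f)∘A_π = A_π∘P(id_A×f)). Let ρ and σ be affine P-distances on A and B respectively and let π : A×B → B be the projection. If α ∈ Des_{ρ⊠σ}(A×B), then E_π(α) ∈ Des_σ(B) and A_π(α) ∈ Des_σ(B). -/

import Mathlib

open CategoryTheory CategoryTheory.Limits

universe w v u

variable {C : Type u} [Category.{v} C]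

/-- A primary linear doctrine: a functor `P : Cᵒᵖ → Pos` (given by fibres `P X` and
monotone reindexings `re f`) together with a commutative-monoid structure
`(∗, κ) = (mul, unit)` on each fibre, preserved by reindexing. -/
structure PLDoctrine (P : C → Type w) [∀ X, PartialOrder (P X)] where
  re : ∀ {X Y : C}, (X ⟶ Y) → P Y → P X
  re_mono : ∀ {X Y : C} (f : X ⟶ Y), Monotone (re f)
  re_id : ∀ {X : C} (a : P X), re (𝟙 X) a = a
  re_comp : ∀ {X Y Z : C} (f : X ⟶ Y) (g : Y ⟶ Z) (a : P Z),
    re (f ≫ g) a = re f (re g a)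
  mul : ∀ {X : C}, P X → P X → P X
  unit : ∀ X : C, P X
  mul_mono : ∀ {X : C} {a b a' b' : P X}, a ≤ b → a' ≤ b' → mul a a' ≤ mul b b'
  mul_assoc : ∀ {X : C} (a b c : P X), mul (mul a b) c = mul a (mul b c)
  mul_comm : ∀ {X : C} (a b : P X), mul a b = mul b a
  mul_unit : ∀ {X : C} (a : P X), mul a (unit X) = a
  re_mul : ∀ {X Y : C} (f : X ⟶ Y) (a b : P Y),
    re f (mul a b) = mul (re f a) (re f b)
  re_unit : ∀ {X Y : C} (f : X ⟶ Y), re f (unit Y) = unit X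

variable [HasFiniteProducts C]

/-- The pairing `⟨π₁,π₂⟩` of the first two projections of a triple `(X × A) × B`. -/
noncomputable def proj12 (X A B : C) : (X ⨯ A) ⨯ B ⟶ X ⨯ A :=
  prod.lift (prod.fst ≫ prod.fst) (prod.fst ≫ prod.snd)

/-- The pairing `⟨π₂,π₃⟩` of the last two projections of a triple `(X × A) × B`. -/
noncomputable def proj23 (X A B : C) : (X ⨯ A) ⨯ B ⟶ A ⨯ B :=
  prod.lift (prod.fst ≫ prod.snd) prod.snd

/-- The pairing `⟨π₁,π₃⟩` of the outer projections of a triple `(X × A) × B`. -/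
noncomputable def proj13 (X A B : C) : (X ⨯ A) ⨯ B ⟶ X ⨯ B :=
  prod.lift (prod.fst ≫ prod.fst) prod.snd

/-- The pairing `⟨π₁,π₃⟩` of a quadruple `(A × B) × (A' × B')`. -/
noncomputable def proj13' (A B A' B' : C) : (A ⨯ B) ⨯ (A' ⨯ B') ⟶ A ⨯ A' :=
  prod.lift (prod.fst ≫ prod.fst) (prod.snd ≫ prod.fst)

/-- The pairing `⟨π₂,π₄⟩` of a quadruple `(A × B) × (A' × B')`. -/
noncomputable def proj24' (A B A' B' : C) : (A ⨯ B) ⨯ (A' ⨯ B') ⟶ B ⨯ B' :=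
  prod.lift (prod.fst ≫ prod.snd) (prod.snd ≫ prod.snd)

/-- A `P`-distance on an object `A`: a reflexive, symmetric and transitive element
of `P (A × A)`. -/
structure IsDistance {P : C → Type w} [∀ X, PartialOrder (P X)]
    (D : PLDoctrine P) (A : C) (ρ : P (A ⨯ A)) : Prop where
  refl : D.unit A ≤ D.re (diag A) ρ
  symm : ρ ≤ D.re (prod.lift prod.snd prod.fst) ρ
  trans : D.mul (D.re (proj12 A A A) ρ) (D.re (proj23 A A A) ρ) ≤ D.re (proj13 A A A) ρ

/-- An element is affine if it is below the monoidal unit. -/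
def IsAffine {P : C → Type w} [∀ X, PartialOrder (P X)]
    (D : PLDoctrine P) {A : C} (α : P A) : Prop :=
  α ≤ D.unit A

/-- An element is replicable if it is below its square. -/
def IsReplicable {P : C → Type w} [∀ X, PartialOrder (P X)]
    (D : PLDoctrine P) {A : C} (α : P A) : Prop :=
  α ≤ D.mul α α

/-- A primary linear doctrine is elementary if every object `A` has an equality
predicate `δ_A ∈ P (A × A)` which is reflexive and substitutive. -/
def IsElementary {P : C → Type w} [∀ X, PartialOrder (P X)] (D : PLDoctrine P) : Prop :=
  ∀ A : C, ∃ δA : P (A ⨯ A),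
    D.unit A ≤ D.re (diag A) δA ∧
    ∀ (X : C) (α : P (X ⨯ A)),
      D.mul (D.re (proj12 X A A) α) (D.re (proj23 X A A) δA) ≤ D.re (proj13 X A A) α

/-- `ρ ⊠ σ := P⟨π₁,π₃⟩(ρ) ∗ P⟨π₂,π₄⟩(σ)`. -/
noncomputable def boxProd {P : C → Type w} [∀ X, PartialOrder (P X)] (D : PLDoctrine P) {A B : C}
    (ρ : P (A ⨯ A)) (σ : P (B ⨯ B)) : P ((A ⨯ B) ⨯ (A ⨯ B)) :=
  D.mul (D.re (proj13' A B A B) ρ) (D.re (proj24' A B A B) σ)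

/-- A resource semiring: a partially ordered set with a commutative additive monoid
and a multiplicative monoid structure, multiplication distributing over addition and
absorbing zero, both operations monotone. -/
class ResourceSemiring (R : Type*) extends PartialOrder R, AddCommMonoid R, Monoid R where
  left_distrib : ∀ a b c : R, a * (b + c) = a * b + a * c
  right_distrib : ∀ a b c : R, (a + b) * c = a * c + b * c
  mul_zero : ∀ a : R, a * 0 = 0
  zero_mul : ∀ a : R, 0 * a = 0
  add_mono : ∀ {a b c d : R}, a ≤ b → c ≤ d → a + c ≤ b + d
  mul_mono : ∀ {a b c d : R}, a ≤ b → c ≤ d → a * c ≤ b * d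

/-- The conditions making a family `bang : R → P X → P X` an `R`-graded modality
on a primary linear doctrine. -/
def IsGradedModality (R : Type*) [ResourceSemiring R] {P : C → Type w}
    [∀ X, PartialOrder (P X)] (D : PLDoctrine P)
    (bang : R → ∀ {X : C}, P X → P X) : Prop :=
  (∀ (r : R) (X : C), Monotone (fun a : P X => bang r a)) ∧
  (∀ (r : R) (X Y : C) (f : X ⟶ Y) (a : P Y), D.re f (bang r a) = bang r (D.re f a)) ∧
  (∀ (r : R) (X : C), D.unit X ≤ bang r (D.unit X)) ∧
  (∀ (r : R) (X : C) (a b : P X), D.mul (bang r a) (bang r b) ≤ bang r (D.mul a b)) ∧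
  (∀ (X : C) (a : P X), bang (0 : R) a ≤ D.unit X) ∧
  (∀ (r s : R) (X : C) (a : P X), bang (r + s) a ≤ D.mul (bang r a) (bang s a)) ∧
  (∀ (X : C) (a : P X), bang (1 : R) a ≤ a) ∧
  (∀ (r s : R) (X : C) (a : P X), bang (r * s) a ≤ bang r (bang s a)) ∧
  (∀ (r s : R) (X : C) (a : P X), s ≤ r → bang r a ≤ bang s a)

/-- An `R`-graded doctrine: a primary linear doctrine with an `R`-graded modality. -/
structure GradedDoctrine (R : Type*) [ResourceSemiring R] (P : C → Type w)
    [∀ X, PartialOrder (P X)] extends PLDoctrine P where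
  bang : R → ∀ {X : C}, P X → P X
  bang_mono : ∀ (r : R) {X : C} {a b : P X}, a ≤ b → bang r a ≤ bang r b
  bang_natural : ∀ (r : R) {X Y : C} (f : X ⟶ Y) (a : P Y),
    re f (bang r a) = bang r (re f a)
  bang_unit : ∀ (r : R) (X : C), unit X ≤ bang r (unit X)
  bang_mul : ∀ (r : R) {X : C} (a b : P X),
    mul (bang r a) (bang r b) ≤ bang r (mul a b)
  bang_zero : ∀ {X : C} (a : P X), bang 0 a ≤ unit X
  bang_add : ∀ (r s : R) {X : C} (a : P X),
    bang (r + s) a ≤ mul (bang r a) (bang s a)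
  bang_counit : ∀ {X : C} (a : P X), bang 1 a ≤ a
  bang_comul : ∀ (r s : R) {X : C} (a : P X), bang (r * s) a ≤ bang r (bang s a)
  bang_contra : ∀ {r s : R} {X : C} (a : P X), s ≤ r → bang r a ≤ bang s a

/-- An `R`-Lipschitz doctrine structure on an `R`-graded doctrine: a family of
`P`-distances `δ_A` satisfying graded substitutivity (a), compatibility with binary
products (b), (c) and the terminal object (d). -/
structure IsLipschitz {R : Type*} [ResourceSemiring R] {P : C → Type w}
    [∀ X, PartialOrder (P X)] (G : GradedDoctrine R P)
    (δ : ∀ A : C, P (A ⨯ A)) : Prop where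
  dist : ∀ A : C, IsDistance G.toPLDoctrine A (δ A)
  subst : ∀ (X A : C) (α : P (X ⨯ A)), ∃ r : R,
    G.mul (G.re (proj12 X A A) α) (G.bang r (G.re (proj23 X A A) (δ A))) ≤
      G.re (proj13 X A A) α
  prod_eq : ∀ A X : C,
    δ (A ⨯ X) = G.mul (G.re (proj13' A X A X) (δ A)) (G.re (proj24' A X A X) (δ X))
  prod_le_left : ∀ A X : C, δ (A ⨯ X) ≤ G.re (proj13' A X A X) (δ A)
  prod_le_right : ∀ A X : C, δ (A ⨯ X) ≤ G.re (proj24' A X A X) (δ X)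
  unit_eq : δ (⊤_ C) = G.unit ((⊤_ C) ⨯ (⊤_ C))

/-- `r` tracks `f : (A,ρ) → (B,σ)` when `!_r ρ ≤ P(f×f)(σ)`. -/
def Tracks {R : Type*} [ResourceSemiring R] {P : C → Type w} [∀ X, PartialOrder (P X)]
    (G : GradedDoctrine R P) {A B : C} (ρ : P (A ⨯ A)) (σ : P (B ⨯ B))
    (f : A ⟶ B) (r : R) : Prop :=
  G.bang r ρ ≤ G.re (prod.map f f) σ

/-- `r ⊩_ρ α` : the graded descent-datum condition `P(π₁)(α) ∗ !_r ρ ≤ P(π₂)(α)`. -/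
def Forces {R : Type*} [ResourceSemiring R] {P : C → Type w} [∀ X, PartialOrder (P X)]
    (G : GradedDoctrine R P) {A : C} (ρ : P (A ⨯ A)) (r : R) (α : P A) : Prop :=
  G.mul (G.re (prod.fst : A ⨯ A ⟶ A) α) (G.bang r ρ) ≤
    G.re (prod.snd : A ⨯ A ⟶ A) α

/-- The `R`-graded descent data `Des_ρ(A)`. -/
def DescentData {R : Type*} [ResourceSemiring R] {P : C → Type w}
    [∀ X, PartialOrder (P X)] (G : GradedDoctrine R P) {A : C}
    (ρ : P (A ⨯ A)) : Set (P A) :=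
  {α | ∃ r : R, Forces G ρ r α}

/-- An element `α` is `!`-intuitionistic if `α ≤ !_r α` for all `r`. -/
def IsIntuitionistic {R : Type*} [ResourceSemiring R] {P : C → Type w}
    [∀ X, PartialOrder (P X)] (G : GradedDoctrine R P) {A : C} (α : P A) : Prop :=
  ∀ r : R, α ≤ G.bang r α

/-- The iterated monoidal product of a list of elements of a fibre. -/
def PLDoctrine.listMul {P : C → Type w} [∀ X, PartialOrder (P X)]
    (D : PLDoctrine P) {X : C} : List (P X) → P X
  | [] => D.unit X
  | a :: l => D.mul a (D.listMul l)

/-- in a multiplicative `R`-graded doctrine with quantifiers (left and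
right adjoints to reindexing along projections, satisfying Beck–Chevalley), the
quantifiers map descent data over `(A × B, ρ ⊠ σ)` to descent data over `(B, σ)`. -/
theorem statement18 {R : Type*} [ResourceSemiring R]
    {P : C → Type w} [∀ X, PartialOrder (P X)] (G : GradedDoctrine R P)
    (limp : ∀ {X : C}, P X → P X → P X)
    (hadj : ∀ (X : C) (α β γ : P X), γ ≤ limp α β ↔ G.mul γ α ≤ β)
    (hre : ∀ (X Y : C) (f : X ⟶ Y) (α β : P Y),
      G.re f (limp α β) = limp (G.re f α) (G.re f β))
    (Ex : ∀ (A X : C), P (A ⨯ X) → P X)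
    (hEx : ∀ (A X : C) (α : P (A ⨯ X)) (β : P X),
      Ex A X α ≤ β ↔ α ≤ G.re (prod.snd : A ⨯ X ⟶ X) β)
    (Al : ∀ (A X : C), P (A ⨯ X) → P X)
    (hAl : ∀ (A X : C) (α : P (A ⨯ X)) (β : P X),
      β ≤ Al A X α ↔ G.re (prod.snd : A ⨯ X ⟶ X) β ≤ α)
    (hBCE : ∀ (A X B : C) (f : X ⟶ B) (α : P (A ⨯ B)),
      G.re f (Ex A B α) = Ex A X (G.re (prod.map (𝟙 A) f) α))
    (hBCA : ∀ (A X B : C) (f : X ⟶ B) (α : P (A ⨯ B)),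
      G.re f (Al A B α) = Al A X (G.re (prod.map (𝟙 A) f) α))
    {A B : C} (ρ : P (A ⨯ A)) (σ : P (B ⨯ B))
    (hρ : IsDistance G.toPLDoctrine A ρ) (hρa : IsAffine G.toPLDoctrine ρ)
    (hσ : IsDistance G.toPLDoctrine B σ) (hσa : IsAffine G.toPLDoctrine σ)
    (α : P (A ⨯ B)) (hα : α ∈ DescentData G (boxProd G.toPLDoctrine ρ σ)) :
    Ex A B α ∈ DescentData G σ ∧ Al A B α ∈ DescentData G σ := by
  obtain ⟨r, hr⟩ := hα
  set f : A ⨯ (B ⨯ B) ⟶ (A ⨯ B) ⨯ (A ⨯ B) :=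
    prod.lift (prod.lift prod.fst (prod.snd ≫ prod.fst))
      (prod.lift prod.fst (prod.snd ≫ prod.snd)) with hf
  have e1 : f ≫ (prod.fst : (A ⨯ B) ⨯ (A ⨯ B) ⟶ A ⨯ B) =
      prod.map (𝟙 A) (prod.fst : B ⨯ B ⟶ B) := by
    apply Limits.prod.hom_ext <;> simp [hf, prod.lift_fst (C := C), prod.lift_snd (C := C), prod.lift_fst_assoc (C := C), prod.lift_snd_assoc (C := C)]
  have e2 : f ≫ (prod.snd : (A ⨯ B) ⨯ (A ⨯ B) ⟶ A ⨯ B) =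
      prod.map (𝟙 A) (prod.snd : B ⨯ B ⟶ B) := by
    apply Limits.prod.hom_ext <;> simp [hf, prod.lift_fst (C := C), prod.lift_snd (C := C), prod.lift_fst_assoc (C := C), prod.lift_snd_assoc (C := C)]
  have e3 : f ≫ proj13' A B A B = (prod.fst : A ⨯ (B ⨯ B) ⟶ A) ≫ diag A := by
    apply Limits.prod.hom_ext <;> simp [hf, proj13', diag, prod.comp_lift (C := C), prod.lift_fst (C := C), prod.lift_snd (C := C), prod.lift_fst_assoc (C := C), prod.lift_snd_assoc (C := C)]
  have e4 : f ≫ proj24' A B A B = (prod.snd : A ⨯ (B ⨯ B) ⟶ B ⨯ B) := by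
    apply Limits.prod.hom_ext <;> simp [hf, proj24', prod.lift_fst (C := C), prod.lift_snd (C := C), prod.lift_fst_assoc (C := C), prod.lift_snd_assoc (C := C)]
  have hunit : G.unit (A ⨯ (B ⨯ B)) ≤
      G.re ((prod.fst : A ⨯ (B ⨯ B) ⟶ A) ≫ diag A) ρ := by
    rw [G.re_comp]
    calc G.unit _ = G.re (prod.fst : A ⨯ (B ⨯ B) ⟶ A) (G.unit A) := (G.re_unit _).symm
      _ ≤ _ := G.re_mono _ hρ.refl
  have key : G.mul (G.re (prod.map (𝟙 A) (prod.fst : B ⨯ B ⟶ B)) α)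
      (G.re (prod.snd : A ⨯ (B ⨯ B) ⟶ B ⨯ B) (G.bang r σ)) ≤
      G.re (prod.map (𝟙 A) (prod.snd : B ⨯ B ⟶ B)) α := by
    have h1 := G.re_mono f hr
    rw [G.re_mul, ← G.re_comp, ← G.re_comp, e1, e2, G.bang_natural] at h1
    refine le_trans ?_ h1
    apply G.mul_mono le_rfl
    rw [G.bang_natural]
    apply G.bang_mono
    unfold boxProd
    rw [G.re_mul, ← G.re_comp, ← G.re_comp, e3, e4]
    calc G.re prod.snd σ = G.mul (G.re prod.snd σ) (G.unit _) := (G.mul_unit _).symm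
      _ ≤ G.mul (G.re prod.snd σ) (G.re (prod.fst ≫ diag A) ρ) :=
        G.mul_mono le_rfl hunit
      _ = _ := G.mul_comm _ _
  constructor
  · refine ⟨r, ?_⟩
    unfold Forces
    rw [hBCE A (B ⨯ B) B prod.fst α, hBCE A (B ⨯ B) B prod.snd α, ← hadj, hEx, hre,
      hadj]
    exact le_trans key ((hEx A (B ⨯ B) _ _).mp le_rfl)
  · refine ⟨r, ?_⟩
    unfold Forces
    rw [hBCA A (B ⨯ B) B prod.fst α, hBCA A (B ⨯ B) B prod.snd α, hAl, G.re_mul]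
    exact le_trans (G.mul_mono ((hAl A (B ⨯ B) _ _).mp le_rfl) le_rfl) key
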